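/- For every positive integer D ≡ 0 or 1 (mod 4) that is not a perfect square, the Pell equation T² − D·S² = 4 has a solution in positive integers (T,S). -/
import Mathlib

/-- For every positive integer `D ≡ 0` or `1 (mod 4)` that is not
a perfect square, the Pell equation `T² − DS² = 4` has a solution in positive
integers. -/
theorem stmt14 (D : ℕ) (hpos : 0 < D) (hmod : D % 4 = 0 ∨ D % 4 = 1)
    (hsq : ¬∃ n : ℕ, n ^ 2 = D) :
    ∃ T S : ℕ, 0 < T ∧ 0 < S ∧ (T : ℤ) ^ 2 - (D : ℤ) * (S : ℤ) ^ 2 = 4 := by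
  have hd : ¬IsSquare ((D : ℤ)) := by
    rw [Int.isSquare_natCast_iff]
    rintro ⟨r, hr⟩
    exact hsq ⟨r, by rw [sq, ← hr]⟩
  obtain ⟨x, y, h, hy⟩ := Pell.exists_of_not_isSquare (d := (D : ℤ))
    (by exact_mod_cast hpos) hd
  refine ⟨2 * x.natAbs, 2 * y.natAbs, ?_, ?_, ?_⟩
  · have hx : x ≠ 0 := by
      rintro rfl
      nlinarith [sq_nonneg y, Int.natCast_pos.mpr hpos]
    positivity
  · positivity
  · push_cast
    rw [mul_pow, mul_pow, sq_abs, sq_abs]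
    linarith
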